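/- Under the same assumptions, N*(τ) → +∞ as τ → 0+ and N*(τ) → 0 as τ → τ̂ (when τ̂ < ∞). -/

import Mathlib

open MeasureTheory Filter

/-- The state trajectory `z(t;ψ,u) = T_t ψ + ∫_0^t T_{t-σ} B u(σ) dσ`. -/
noncomputable def traj {X U : Type*} [NormedAddCommGroup X] [NormedSpace ℝ X] [CompleteSpace X]
    [NormedAddCommGroup U] [NormedSpace ℝ U]
    (T : ℝ → X →L[ℝ] X) (B : U →L[ℝ] X) (ψ : X) (u : ℝ → U) (t : ℝ) : X :=
  T t ψ + ∫ σ in Set.Ioc 0 t, T (t - σ) (B (u σ))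

/-!
Near `τ = 0` the control has no time to act: `‖T_τ ψ‖ - r ≤ ‖B‖ τ N*(τ)` while
`‖T_τ ψ‖ → ‖ψ‖ > r`. Near `τ̂` the free state `T_τ ψ` is already almost in the ball, so it is
enough to steer the control term close to `-θ T_τ ψ` for a small `θ > 0`. By Hahn–Banach
separation, a target `x` is approximately reachable with controls bounded by `ε` as soon as
`⟪η, x⟫ ≤ ε ∫_0^τ ‖B* T_t* η‖ dt` for all `η`, the right-hand side being attained by the
bang-bang control `ε g / ‖g‖`, `g(σ) = B* T_{τ-σ}* η`. For `x = -θ T_τ ψ` the observability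
inequality gives this with `ε = θ ‖ψ‖ K(τ)`, which is small when `θ` is.
-/

open Set Topology
open scoped InnerProductSpace

theorem continuous_apply_of_forall_norm_le {α 𝕜 E F : Type*} [TopologicalSpace α]
    [NontriviallyNormedField 𝕜] [SeminormedAddCommGroup E] [NormedSpace 𝕜 E]
    [SeminormedAddCommGroup F] [NormedSpace 𝕜 F] {S : α → E →L[𝕜] F} {C : ℝ}
    (hS : ∀ a, ‖S a‖ ≤ C) (hcont : ∀ x, Continuous fun a => S a x) :
    Continuous fun p : α × E => S p.1 p.2 := by
  rw [continuous_iff_continuousAt]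
  rintro ⟨a₀, x₀⟩
  rw [ContinuousAt, tendsto_iff_norm_sub_tendsto_zero]
  have hbound : ∀ p : α × E,
      ‖S p.1 p.2 - S a₀ x₀‖ ≤ C * ‖p.2 - x₀‖ + ‖S p.1 x₀ - S a₀ x₀‖ := fun p => by
    calc ‖S p.1 p.2 - S a₀ x₀‖ = ‖S p.1 (p.2 - x₀) + (S p.1 x₀ - S a₀ x₀)‖ := by
          rw [map_sub]; abel_nf
      _ ≤ _ := (norm_add_le _ _).trans (add_le_add_left ((S p.1).le_of_opNorm_le (hS _) _) _)
  have hcont₀ := hcont x₀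
  have hlim : Continuous fun p : α × E => C * ‖p.2 - x₀‖ + ‖S p.1 x₀ - S a₀ x₀‖ := by fun_prop
  exact squeeze_zero (fun _ => norm_nonneg _) hbound (hlim.tendsto' _ _ (by simp))

theorem setIntegral_Ioc_comp_sub_left {E : Type*} [NormedAddCommGroup E] [NormedSpace ℝ E]
    (f : ℝ → E) {τ : ℝ} (hτ : 0 ≤ τ) :
    ∫ σ in Ioc 0 τ, f (τ - σ) = ∫ t in Ioc 0 τ, f t := by
  rw [← intervalIntegral.integral_of_le hτ, ← intervalIntegral.integral_of_le hτ,
    intervalIntegral.integral_comp_sub_left, sub_self, sub_zero]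

theorem norm_smul_div_norm_le {E : Type*} [SeminormedAddCommGroup E] [NormedSpace ℝ E]
    {ε : ℝ} (hε : 0 ≤ ε) (w : E) : ‖(ε / ‖w‖) • w‖ ≤ ε := by
  rw [norm_smul, Real.norm_of_nonneg (by positivity)]
  rcases (norm_nonneg w).eq_or_lt' with hw | hw
  · simp [hw, hε]
  · rw [div_mul_cancel₀ _ hw.ne']

theorem real_inner_smul_div_norm {E : Type*} [NormedAddCommGroup E] [InnerProductSpace ℝ E]
    (ε : ℝ) (w : E) : ⟪w, (ε / ‖w‖) • w⟫_ℝ = ε * ‖w‖ := by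
  rw [real_inner_smul_right, real_inner_self_eq_norm_sq]
  rcases eq_or_ne ‖w‖ 0 with hw | hw
  · simp [hw]
  · field_simp

structure IsContractionSemigroup {E : Type*} [NormedAddCommGroup E] [NormedSpace ℝ E]
    (T : ℝ → E →L[ℝ] E) : Prop where
  map_zero : T 0 = 1
  map_add : ∀ s t : ℝ, 0 ≤ s → 0 ≤ t → T (s + t) = (T s).comp (T t)
  norm_le_one : ∀ t : ℝ, 0 ≤ t → ‖T t‖ ≤ 1

namespace IsContractionSemigroup

section Banach

variable {E : Type*} [NormedAddCommGroup E] [NormedSpace ℝ E] {T : ℝ → E →L[ℝ] E}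

theorem norm_apply_le (hT : IsContractionSemigroup T) {t : ℝ} (ht : 0 ≤ t) (x : E) :
    ‖T t x‖ ≤ ‖x‖ :=
  ((T t).le_of_opNorm_le (hT.norm_le_one t ht) x).trans_eq (one_mul _)

theorem norm_apply_sub_apply_le (hT : IsContractionSemigroup T) {s t : ℝ} (hs : 0 ≤ s)
    (ht : 0 ≤ t) (x : E) : ‖T t x - T s x‖ ≤ ‖T |t - s| x - x‖ := by
  wlog hst : s ≤ t generalizing s t
  · rw [norm_sub_rev, abs_sub_comm]
    exact this ht hs (le_of_not_ge hst)
  have hsplit : T t = (T s).comp (T (t - s)) := by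
    simpa using hT.map_add s (t - s) hs (sub_nonneg.2 hst)
  calc ‖T t x - T s x‖ = ‖T s (T (t - s) x - x)‖ := by rw [hsplit, map_sub]; rfl
    _ ≤ ‖T (t - s) x - x‖ := hT.norm_apply_le hs _
    _ = ‖T |t - s| x - x‖ := by rw [abs_of_nonneg (sub_nonneg.2 hst)]

theorem continuousOn_apply (hT : IsContractionSemigroup T) {x : E}
    (hx : Tendsto (fun h => T h x) (𝓝[≥] 0) (𝓝 x)) :
    ContinuousOn (fun t => T t x) (Ici 0) := by
  intro t₀ ht₀
  rw [ContinuousWithinAt, tendsto_iff_norm_sub_tendsto_zero]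
  have hdist : Tendsto (fun t => |t - t₀|) (𝓝[Ici 0] t₀) (𝓝[≥] 0) :=
    tendsto_nhdsWithin_iff.2
      ⟨(((continuous_id.sub continuous_const).abs.tendsto' t₀ 0 (by simp)).mono_left
        nhdsWithin_le_nhds), Eventually.of_forall fun t => mem_Ici.2 (abs_nonneg _)⟩
  refine squeeze_zero' (Eventually.of_forall fun _ => norm_nonneg _) ?_
    ((tendsto_iff_norm_sub_tendsto_zero.1 hx).comp hdist)
  filter_upwards [self_mem_nhdsWithin] with t ht
  exact hT.norm_apply_sub_apply_le ht₀ ht x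

theorem ae_norm_apply_control_le {U : Type*} [NormedAddCommGroup U] [NormedSpace ℝ U]
    (hT : IsContractionSemigroup T) (B : U →L[ℝ] E) {τ C : ℝ} {f : ℝ → U}
    (hfC : ∀ᵐ t ∂volume.restrict (Ioo 0 τ), ‖f t‖ ≤ C) :
    ∀ᵐ σ ∂volume.restrict (Ioc 0 τ), ‖T (τ - σ) (B (f σ))‖ ≤ ‖B‖ * C := by
  rw [← Measure.restrict_congr_set Ioo_ae_eq_Ioc]
  filter_upwards [hfC, ae_restrict_mem measurableSet_Ioo] with σ hσC hσ
  calc ‖T (τ - σ) (B (f σ))‖ ≤ ‖B (f σ)‖ := hT.norm_apply_le (by linarith [hσ.2]) _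
    _ ≤ ‖B‖ * ‖f σ‖ := B.le_opNorm _
    _ ≤ ‖B‖ * C := by gcongr

theorem norm_integral_control_le {U : Type*} [NormedAddCommGroup U] [NormedSpace ℝ U]
    [CompleteSpace E] (hT : IsContractionSemigroup T) (B : U →L[ℝ] E) {τ C : ℝ} (hτ : 0 ≤ τ)
    {f : ℝ → U} (hfC : ∀ᵐ t ∂volume.restrict (Ioo 0 τ), ‖f t‖ ≤ C) :
    ‖∫ σ in Ioc 0 τ, T (τ - σ) (B (f σ))‖ ≤ ‖B‖ * C * τ := by
  have h := norm_setIntegral_le_of_norm_le_const_ae (by simp) (hT.ae_norm_apply_control_le B hfC)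
  rwa [Real.volume_real_Ioc_of_le hτ, sub_zero] at h

theorem integrable_control {U : Type*} [NormedAddCommGroup U] [NormedSpace ℝ U]
    (hT : IsContractionSemigroup T) (hTcont : ∀ x : E, Continuous fun t => T t x)
    (B : U →L[ℝ] E) {τ C : ℝ} {f : ℝ → U}
    (hfm : AEStronglyMeasurable f (volume.restrict (Ioo 0 τ)))
    (hfC : ∀ᵐ t ∂volume.restrict (Ioo 0 τ), ‖f t‖ ≤ C) :
    Integrable (fun σ => T (τ - σ) (B (f σ))) (volume.restrict (Ioc 0 τ)) := by
  have : IsFiniteMeasure (volume.restrict (Ioc (0 : ℝ) τ)) := ⟨by simp⟩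
  rw [Measure.restrict_congr_set Ioo_ae_eq_Ioc] at hfm
  -- `T` is bounded only on `[0, ∞)`, hence the clamp `max · 0`.
  have hjoint : Continuous fun p : ℝ × E => T (max p.1 0) p.2 :=
    continuous_apply_of_forall_norm_le (fun t => hT.norm_le_one _ (le_max_right t 0))
      fun x => (hTcont x).comp (continuous_id.max continuous_const)
  have hmeas : AEStronglyMeasurable (fun σ => T (max (τ - σ) 0) (B (f σ)))
      (volume.restrict (Ioc 0 τ)) :=
    hjoint.comp_aestronglyMeasurable
      ((continuous_const.sub continuous_id).aestronglyMeasurable.prodMk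
        (B.continuous.comp_aestronglyMeasurable hfm))
  refine Integrable.mono' (integrable_const (‖B‖ * C)) (hmeas.congr ?_)
    (hT.ae_norm_apply_control_le B hfC)
  filter_upwards [ae_restrict_mem measurableSet_Ioc] with σ hσ
  rw [max_eq_left (by linarith [hσ.2])]

end Banach

section Hilbert

variable {H : Type*} [NormedAddCommGroup H] [InnerProductSpace ℝ H] [CompleteSpace H]
  {T : ℝ → H →L[ℝ] H}

protected theorem adjoint (hT : IsContractionSemigroup T) :
    IsContractionSemigroup fun t => (T t).adjoint where
  map_zero := by rw [hT.map_zero, ContinuousLinearMap.adjoint_one]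
  map_add s t hs ht := by
    rw [add_comm, hT.map_add t s ht hs, ContinuousLinearMap.adjoint_comp]
  norm_le_one t ht := by
    rw [LinearIsometryEquiv.norm_map]
    exact hT.norm_le_one t ht

/-- Weak continuity upgrades to strong continuity since
`‖T_h* y - y‖² ≤ 2‖y‖² - 2⟪y, T_h y⟫` by contractivity. -/
theorem tendsto_adjoint_apply (hT : IsContractionSemigroup T) {y : H}
    (hy : Tendsto (fun h => T h y) (𝓝[≥] 0) (𝓝 y)) :
    Tendsto (fun h => (T h).adjoint y) (𝓝[≥] 0) (𝓝 y) := by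
  rw [tendsto_iff_norm_sub_tendsto_zero]
  have hbound : ∀ h ∈ Ici (0 : ℝ),
      ‖(T h).adjoint y - y‖ ≤ √(2 * ‖y‖ ^ 2 - 2 * ⟪y, T h y⟫_ℝ) := fun h hh => by
    refine Real.le_sqrt_of_sq_le ?_
    have hcontr : ‖(T h).adjoint y‖ ^ 2 ≤ ‖y‖ ^ 2 := by
      gcongr
      exact hT.adjoint.norm_apply_le hh y
    rw [norm_sub_sq_real, ContinuousLinearMap.adjoint_inner_left]
    linarith
  have hlim : Tendsto (fun h => √(2 * ‖y‖ ^ 2 - 2 * ⟪y, T h y⟫_ℝ)) (𝓝[≥] 0) (𝓝 0) := by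
    have := ((((tendsto_const_nhds (x := y)).inner hy).const_mul 2).const_sub (2 * ‖y‖ ^ 2)).sqrt
    rwa [real_inner_self_eq_norm_sq, sub_self, Real.sqrt_zero] at this
  exact squeeze_zero' (Eventually.of_forall fun _ => norm_nonneg _)
    (eventually_nhdsWithin_of_forall hbound) hlim

theorem continuousOn_adjoint_apply (hT : IsContractionSemigroup T)
    (hTcont : ∀ x : H, Continuous fun t => T t x) (y : H) :
    ContinuousOn (fun t => (T t).adjoint y) (Ici 0) := by
  refine hT.adjoint.continuousOn_apply (hT.tendsto_adjoint_apply ?_)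
  simpa [hT.map_zero] using ((hTcont y).tendsto 0).mono_left nhdsWithin_le_nhds

end Hilbert

end IsContractionSemigroup

section Reachability

variable {X U : Type*} [NormedAddCommGroup X] [NormedSpace ℝ X]
  [NormedAddCommGroup U] [NormedSpace ℝ U] {T : ℝ → X →L[ℝ] X} {B : U →L[ℝ] X} {τ ε : ℝ}

def reachableSet (T : ℝ → X →L[ℝ] X) (B : U →L[ℝ] X) (τ ε : ℝ) : Set X :=
  {v | ∃ f : ℝ → U, AEStronglyMeasurable f (volume.restrict (Ioo 0 τ)) ∧
    (∀ᵐ t ∂volume.restrict (Ioo 0 τ), ‖f t‖ ≤ ε) ∧ ∫ σ in Ioc 0 τ, T (τ - σ) (B (f σ)) = v}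

theorem convex_reachableSet (hT : IsContractionSemigroup T)
    (hTcont : ∀ x : X, Continuous fun t => T t x) : Convex ℝ (reachableSet T B τ ε) := by
  rintro _ ⟨f₁, hm₁, hb₁, rfl⟩ _ ⟨f₂, hm₂, hb₂, rfl⟩ a b ha hb hab
  refine ⟨fun σ => a • f₁ σ + b • f₂ σ, (hm₁.const_smul a).add (hm₂.const_smul b), ?_, ?_⟩
  · filter_upwards [hb₁, hb₂] with σ h₁ h₂
    calc ‖a • f₁ σ + b • f₂ σ‖ ≤ a * ‖f₁ σ‖ + b * ‖f₂ σ‖ := by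
          refine (norm_add_le _ _).trans_eq ?_
          rw [norm_smul, norm_smul, Real.norm_of_nonneg ha, Real.norm_of_nonneg hb]
      _ ≤ a * ε + b * ε := by gcongr
      _ = ε := by rw [← add_mul, hab, one_mul]
  · simp only [map_add, map_smul]
    rw [integral_add, integral_smul, integral_smul]
    · exact (hT.integrable_control hTcont B hm₁ hb₁).smul a
    · exact (hT.integrable_control hTcont B hm₂ hb₂).smul b

end Reachability

section Duality

variable {X U : Type*} [NormedAddCommGroup X] [InnerProductSpace ℝ X] [CompleteSpace X]
  [NormedAddCommGroup U] [InnerProductSpace ℝ U] [CompleteSpace U]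
  {T : ℝ → X →L[ℝ] X} {B : U →L[ℝ] X} {τ ε : ℝ}

theorem exists_mem_reachableSet_inner_eq (hT : IsContractionSemigroup T)
    (hTcont : ∀ x : X, Continuous fun t => T t x) (hτ : 0 ≤ τ) (hε : 0 ≤ ε) (η : X) :
    ∃ v ∈ reachableSet T B τ ε, ⟪η, v⟫_ℝ = ε * ∫ t in Ioc 0 τ, ‖B.adjoint ((T t).adjoint η)‖ := by
  set g : ℝ → U := fun σ => B.adjoint ((T (τ - σ)).adjoint η)
  have hg : AEStronglyMeasurable g (volume.restrict (Ioo 0 τ)) := by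
    refine ContinuousOn.aestronglyMeasurable ?_ measurableSet_Ioo
    refine B.adjoint.continuous.comp_continuousOn
      ((hT.continuousOn_adjoint_apply hTcont η).comp (by fun_prop) fun σ hσ => ?_)
    exact mem_Ici.2 (by linarith [hσ.2])
  set f : ℝ → U := fun σ => (ε / ‖g σ‖) • g σ
  have hfm : AEStronglyMeasurable f (volume.restrict (Ioo 0 τ)) :=
    (aemeasurable_const.div hg.norm.aemeasurable).aestronglyMeasurable.smul hg
  have hfε : ∀ᵐ t ∂volume.restrict (Ioo 0 τ), ‖f t‖ ≤ ε :=
    Eventually.of_forall fun σ => norm_smul_div_norm_le hε (g σ)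
  have hpointwise : ∀ σ, ⟪η, T (τ - σ) (B (f σ))⟫_ℝ = ε * ‖g σ‖ := fun σ => by
    rw [← ContinuousLinearMap.adjoint_inner_left, ← ContinuousLinearMap.adjoint_inner_left,
      real_inner_smul_div_norm]
  refine ⟨_, ⟨f, hfm, hfε, rfl⟩, ?_⟩
  have hinner := (innerSL ℝ η).integral_comp_comm (hT.integrable_control hTcont B hfm hfε)
  simp only [innerSL_apply_apply, hpointwise, integral_const_mul] at hinner
  exact hinner.symm.trans (congrArg (ε * ·)
    (setIntegral_Ioc_comp_sub_left (fun t => ‖B.adjoint ((T t).adjoint η)‖) hτ))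

theorem mem_closure_reachableSet (hT : IsContractionSemigroup T)
    (hTcont : ∀ x : X, Continuous fun t => T t x) (hτ : 0 ≤ τ) (hε : 0 ≤ ε) {x : X}
    (hx : ∀ η : X, ⟪η, x⟫_ℝ ≤ ε * ∫ t in Ioc 0 τ, ‖B.adjoint ((T t).adjoint η)‖) :
    x ∈ closure (reachableSet T B τ ε) := by
  by_contra hnot
  obtain ⟨ℓ, u, hℓu, huℓ⟩ := geometric_hahn_banach_closed_point
    (convex_reachableSet hT hTcont).closure isClosed_closure hnot
  obtain ⟨η, rfl⟩ := (InnerProductSpace.toDual ℝ X).surjective ℓ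
  obtain ⟨v, hv, hηv⟩ := exists_mem_reachableSet_inner_eq (B := B) hT hTcont hτ hε η
  have hlt := hℓu v (subset_closure hv)
  simp only [InnerProductSpace.toDual_apply_apply] at hlt huℓ
  linarith [hx η]

end Duality

section ControlCost

variable {X U : Type*} [NormedAddCommGroup X] [NormedSpace ℝ X] [CompleteSpace X]
  [NormedAddCommGroup U] [NormedSpace ℝ U] {T : ℝ → X →L[ℝ] X} {B : U →L[ℝ] X} {ψ : X} {r τ : ℝ}

def controlCosts (T : ℝ → X →L[ℝ] X) (B : U →L[ℝ] X) (ψ : X) (r τ : ℝ) : Set ℝ :=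
  {C : ℝ | 0 ≤ C ∧ ∃ f : ℝ → U,
    AEStronglyMeasurable f (volume.restrict (Ioo 0 τ)) ∧
    (∀ᵐ t ∂volume.restrict (Ioo 0 τ), ‖f t‖ ≤ C) ∧
    traj T B ψ f τ ∈ Metric.closedBall (0 : X) r}

theorem sub_le_of_mem_controlCosts (hT : IsContractionSemigroup T) (hτ : 0 ≤ τ) {C : ℝ}
    (hC : C ∈ controlCosts T B ψ r τ) : ‖T τ ψ‖ - r ≤ ‖B‖ * C * τ := by
  obtain ⟨-, f, -, hfC, hf⟩ := hC
  rw [mem_closedBall_zero_iff, traj] at hf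
  have := norm_sub_le (T τ ψ + ∫ σ in Ioc 0 τ, T (τ - σ) (B (f σ)))
    (∫ σ in Ioc 0 τ, T (τ - σ) (B (f σ)))
  rw [add_sub_cancel_right] at this
  linarith [hT.norm_integral_control_le B hτ hfC]

theorem tendsto_controlCost_nhdsGT_zero (hT : IsContractionSemigroup T)
    (hψc : ContinuousWithinAt (fun t => T t ψ) (Ioi 0) 0) (hψ : r < ‖ψ‖) {N : ℝ → ℝ}
    (hN : ∀ τ, 0 < τ → N τ ∈ controlCosts T B ψ r τ) :
    Tendsto N (𝓝[>] 0) atTop := by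
  have hbound : ∀ τ ∈ Ioi (0 : ℝ), (‖T τ ψ‖ - r) / (‖B‖ + 1) * τ⁻¹ ≤ N τ := fun τ hτ => by
    have hτ : 0 < τ := hτ
    have hcost := sub_le_of_mem_controlCosts hT hτ.le (hN τ hτ)
    rw [← div_eq_mul_inv, div_div, div_le_iff₀ (by positivity)]
    nlinarith [mul_nonneg (hN τ hτ).1 hτ.le]
  have hψ₀ : Tendsto (fun t => T t ψ) (𝓝[>] 0) (𝓝 ψ) := by
    simpa [ContinuousWithinAt, hT.map_zero] using hψc
  have hlim : Tendsto (fun τ => (‖T τ ψ‖ - r) / (‖B‖ + 1) * τ⁻¹) (𝓝[>] 0) atTop :=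
    Tendsto.pos_mul_atTop (div_pos (sub_pos.2 hψ) (by positivity))
      ((hψ₀.norm.sub_const r).div_const _) tendsto_inv_nhdsGT_zero
  exact tendsto_atTop_mono' _ (eventually_nhdsWithin_of_forall hbound) hlim

end ControlCost

section Observability

variable {X U : Type*} [NormedAddCommGroup X] [InnerProductSpace ℝ X] [CompleteSpace X]
  [NormedAddCommGroup U] [InnerProductSpace ℝ U] [CompleteSpace U]
  {T : ℝ → X →L[ℝ] X} {B : U →L[ℝ] X} {ψ : X} {r τ : ℝ}

theorem mem_controlCosts_of_observability (hT : IsContractionSemigroup T)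
    (hTcont : ∀ x : X, Continuous fun t => T t x) (hτ : 0 ≤ τ) {K θ : ℝ} (hK : 0 ≤ K)
    (hobs : ∀ η : X, ‖(T τ).adjoint η‖ ≤ K * ∫ t in Ioc 0 τ, ‖B.adjoint ((T t).adjoint η)‖)
    (hθ : 0 ≤ θ) (hθψ : ‖(1 - θ) • T τ ψ‖ < r) :
    θ * ‖ψ‖ * K ∈ controlCosts T B ψ r τ := by
  set x : X := -(θ • T τ ψ)
  have hx : ∀ η : X,
      ⟪η, x⟫_ℝ ≤ θ * ‖ψ‖ * K * ∫ t in Ioc 0 τ, ‖B.adjoint ((T t).adjoint η)‖ := fun η => by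
    calc ⟪η, x⟫_ℝ = -(θ * ⟪(T τ).adjoint η, ψ⟫_ℝ) := by
          rw [inner_neg_right, real_inner_smul_right, ContinuousLinearMap.adjoint_inner_left]
      _ ≤ θ * (‖(T τ).adjoint η‖ * ‖ψ‖) := by
          refine (neg_le_abs _).trans ?_
          rw [abs_mul, abs_of_nonneg hθ]
          exact mul_le_mul_of_nonneg_left (abs_real_inner_le_norm _ _) hθ
      _ ≤ θ * ((K * ∫ t in Ioc 0 τ, ‖B.adjoint ((T t).adjoint η)‖) * ‖ψ‖) := by
          gcongr; exact hobs η
      _ = θ * ‖ψ‖ * K * ∫ t in Ioc 0 τ, ‖B.adjoint ((T t).adjoint η)‖ := by ring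
  obtain ⟨_, ⟨f, hfm, hfC, rfl⟩, hdist⟩ := Metric.mem_closure_iff.1
    (mem_closure_reachableSet hT hTcont hτ (by positivity) hx) _ (sub_pos.2 hθψ)
  refine ⟨by positivity, f, hfm, hfC, ?_⟩
  rw [mem_closedBall_zero_iff, traj]
  rw [dist_eq_norm] at hdist
  calc ‖T τ ψ + ∫ σ in Ioc 0 τ, T (τ - σ) (B (f σ))‖
      = ‖(1 - θ) • T τ ψ - (x - ∫ σ in Ioc 0 τ, T (τ - σ) (B (f σ)))‖ := by
        congr 1; simp only [x, sub_smul, one_smul]; abel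
    _ ≤ r := by
        linarith [norm_sub_le ((1 - θ) • T τ ψ) (x - ∫ σ in Ioc 0 τ, T (τ - σ) (B (f σ)))]

theorem tendsto_controlCost_nhdsLT (hT : IsContractionSemigroup T)
    (hTcont : ∀ x : X, Continuous fun t => T t x) {K : ℝ → ℝ} {τhat : ℝ}
    (hK : ∀ τ, 0 < τ → 0 ≤ K τ) (hKc : ContinuousAt K τhat)
    (hobs : ∀ τ : ℝ, 0 < τ → ∀ η : X,
      ‖(T τ).adjoint η‖ ≤ K τ * ∫ t in Ioc 0 τ, ‖B.adjoint ((T t).adjoint η)‖)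
    (hr : 0 < r) (hτhat : 0 < τhat) (hψhat : ‖T τhat ψ‖ ≤ r) {N : ℝ → ℝ}
    (hN : ∀ τ, 0 < τ → IsLeast (controlCosts T B ψ r τ) (N τ)) :
    Tendsto N (𝓝[<] τhat) (𝓝 0) := by
  refine tendsto_order.2 ⟨fun a ha => ?_, fun ε hε => ?_⟩
  · filter_upwards [Ioo_mem_nhdsLT hτhat] with τ hτ using ha.trans_le (hN τ hτ.1).1.1
  obtain ⟨θ, hθε, hθ⟩ : ∃ θ, θ * ‖ψ‖ * K τhat < ε ∧ θ ∈ Ioc 0 1 := by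
    have : Tendsto (fun θ : ℝ => θ * ‖ψ‖ * K τhat) (𝓝[>] 0) (𝓝 0) :=
      ((continuous_id.mul continuous_const).mul continuous_const).tendsto' 0 0 (by simp)
        |>.mono_left nhdsWithin_le_nhds
    exact ((this.eventually (gt_mem_nhds hε)).and (Ioc_mem_nhdsGT one_pos)).exists
  have hcost : Tendsto (fun τ => θ * ‖ψ‖ * K τ) (𝓝[<] τhat) (𝓝 (θ * ‖ψ‖ * K τhat)) :=
    (hKc.const_mul _).mono_left nhdsWithin_le_nhds
  have hball : Tendsto (fun τ => ‖(1 - θ) • T τ ψ‖) (𝓝[<] τhat) (𝓝 ‖(1 - θ) • T τhat ψ‖) :=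
    (((hTcont ψ).const_smul (1 - θ)).norm.tendsto τhat).mono_left nhdsWithin_le_nhds
  have hball_lt : ‖(1 - θ) • T τhat ψ‖ < r := by
    rw [norm_smul, Real.norm_of_nonneg (sub_nonneg.2 hθ.2)]
    nlinarith [hθ.1, mul_le_mul_of_nonneg_left hψhat (sub_nonneg.2 hθ.2)]
  filter_upwards [Ioo_mem_nhdsLT hτhat, hcost.eventually_lt_const hθε,
    hball.eventually_lt_const hball_lt] with τ hτ hcostτ hballτ
  exact ((hN τ hτ.1).2 (mem_controlCosts_of_observability hT hTcont hτ.1.le (hK τ hτ.1)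
    (hobs τ hτ.1) hθ.1.le hballτ)).trans_lt hcostτ

end Observability

/-- Under the same assumptions, `N*(τ) → +∞` as `τ → 0+`, and
`N*(τ) → 0` as `τ → τ̂` when `τ̂ < ∞`, where `τ̂ = min {t ≥ 0 : ‖T_t ψ‖ ≤ r}`. -/
theorem stmt15 {X U : Type*} [NormedAddCommGroup X] [InnerProductSpace ℝ X] [CompleteSpace X]
    [NormedAddCommGroup U] [InnerProductSpace ℝ U] [CompleteSpace U]
    (T : ℝ → X →L[ℝ] X) (B : U →L[ℝ] X)
    -- `T` is a `C₀`-semigroup of contractions (generated by `-A`)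
    (hT0 : T 0 = 1)
    (hTadd : ∀ s t : ℝ, 0 ≤ s → 0 ≤ t → T (s + t) = (T s).comp (T t))
    (hTcont : ∀ x : X, Continuous fun t => T t x)
    (hTcontr : ∀ t : ℝ, 0 ≤ t → ‖T t‖ ≤ 1)
    -- the `L¹` observability inequality `K(τ) ∫_0^τ ‖B*T*_t η‖ dt ≥ ‖T*_τ η‖`
    (K : ℝ → ℝ) (hK_pos : ∀ τ : ℝ, 0 < τ → 0 < K τ) (hK_cont : ContinuousOn K (Set.Ioi 0))
    (hobs : ∀ τ : ℝ, 0 < τ → ∀ η : X,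
      ‖(T τ).adjoint η‖ ≤ K τ * ∫ t in Set.Ioc 0 τ, ‖B.adjoint ((T t).adjoint η)‖)
    (r : ℝ) (hr : 0 < r) (ψ : X) (hψ : ψ ∉ Metric.closedBall (0 : X) r)
    -- `N*(τ)` is the minimal `L^∞`-norm of controls steering `ψ` into `B(0,r)` at time `τ`
    (Nstar : ℝ → ℝ)
    (hNstar : ∀ τ : ℝ, 0 < τ → IsLeast {C : ℝ | 0 ≤ C ∧ ∃ f : ℝ → U,
      AEStronglyMeasurable f (volume.restrict (Set.Ioo 0 τ)) ∧
      (∀ᵐ t ∂volume.restrict (Set.Ioo 0 τ), ‖f t‖ ≤ C) ∧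
      traj T B ψ f τ ∈ Metric.closedBall (0 : X) r} (Nstar τ))
    -- `τ̂ < ∞`: the first time `‖T_t ψ‖ ≤ r` exists
    (τhat : ℝ) (hτhat : IsLeast {t : ℝ | 0 ≤ t ∧ ‖T t ψ‖ ≤ r} τhat) :
    Tendsto Nstar (nhdsWithin 0 (Set.Ioi 0)) atTop ∧
      Tendsto Nstar (nhdsWithin τhat (Set.Iio τhat)) (nhds 0) := by
  have hT : IsContractionSemigroup T := ⟨hT0, hTadd, hTcontr⟩
  have hψr : r < ‖ψ‖ := by simpa using hψ
  have hτhat_pos : 0 < τhat := by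
    refine hτhat.1.1.lt_of_ne fun h => ?_
    have := hτhat.1.2
    rw [← h, hT0, one_apply_eq_self] at this
    linarith
  exact ⟨tendsto_controlCost_nhdsGT_zero hT (hTcont ψ).continuousWithinAt hψr
      fun τ hτ => (hNstar τ hτ).1,
    tendsto_controlCost_nhdsLT hT hTcont (fun τ hτ => (hK_pos τ hτ).le)
      (hK_cont.continuousAt (Ioi_mem_nhds hτhat_pos)) hobs hr hτhat_pos hτhat.1.2 hNstar⟩
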